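/- Let f : ℝⁿ → ℝ ∪ {+∞} be finite and locally lower semicontinuous at x̄, let θ ∈ [0,1), let h(w) := liminf_{τ↓0, w'→w}(f(x̄+τw') − f(x̄))/((1−θ)τ^{1/(1−θ)}), and let W := {w : 0 < h(w) < +∞}. If f satisfies the KŁ property at x̄ with exponent θ and modulus μ > 0, then d(0, ∂[(1−θ)h](w)) ≥ (μ/(1−θ))·((1−θ)h(w))^θ for every w ∈ W. -/

import Mathlib

open Filter Topology
open scoped ENNReal NNReal Pointwise

noncomputable section

abbrev En (n : ℕ) := EuclideanSpace ℝ (Fin n)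

/-- Regular (Fréchet) subgradients of an extended-real-valued function. -/
def RegSubgrad {n : ℕ} (f : En n → EReal) (x : En n) : Set (En n) :=
  {v | ∀ ε : ℝ, 0 < ε → ∃ δ : ℝ, 0 < δ ∧ ∀ u : En n, ‖u - x‖ < δ → u ≠ x →
      f x + (((inner ℝ v (u - x) : ℝ) - ε * ‖u - x‖ : ℝ) : EReal) ≤ f u}

/-- Limiting (Mordukhovich) subgradients. -/
def LimSubgrad {n : ℕ} (f : En n → EReal) (x : En n) : Set (En n) :=
  {v | ∃ xk vk : ℕ → En n,
      Tendsto xk atTop (nhds x) ∧ Tendsto vk atTop (nhds v) ∧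
      Tendsto (fun k => f (xk k)) atTop (nhds (f x)) ∧
      ∀ k, vk k ∈ RegSubgrad f (xk k)}

/-- Outer limiting subgradients: limits of limiting subgradients taken at nearby
points where the function value is strictly larger and converges to `f x`. -/
def OuterSubgrad {n : ℕ} (f : En n → EReal) (x : En n) : Set (En n) :=
  {v | ∃ xk vk : ℕ → En n,
      Tendsto xk atTop (nhds x) ∧ Tendsto vk atTop (nhds v) ∧
      Tendsto (fun k => f (xk k)) atTop (nhds (f x)) ∧
      (∀ k, f x < f (xk k)) ∧ ∀ k, vk k ∈ LimSubgrad f (xk k)}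

/-- Distance from the origin to a set (`∞` for the empty set). -/
def DistZero {n : ℕ} (S : Set (En n)) : ℝ≥0∞ := EMetric.infEdist 0 S

/-- `f` is locally lower semicontinuous at `x`. -/
def LocallyLsc {n : ℕ} (f : En n → EReal) (x : En n) : Prop :=
  ∃ ε : ℝ, 0 < ε ∧ ∀ α : ℝ, (α : EReal) ≤ f x + (ε : ℝ) →
    IsClosed {y : En n | ‖y - x‖ ≤ ε ∧ f y ≤ (α : ℝ)}

/-- The `1/(1-θ)`-th subderivative of `f` at `x`. -/
def ThetaSubderiv {n : ℕ} (f : En n → EReal) (x : En n) (θ : ℝ) (w : En n) : EReal :=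
  Filter.liminf (fun p : ℝ × En n =>
      (((((1 - θ) * p.1 ^ (1 / (1 - θ)))⁻¹ : ℝ)) : EReal) * (f (x + p.1 • p.2) - f x))
    ((nhdsWithin 0 (Set.Ioi 0)) ×ˢ (nhds w))

/-!
Write `h` as the epi-liminf, as `τ ↓ 0`, of the difference quotients
`Φ_τ u = (f (x̄ + τ u) - f x̄) / K_τ` with `K_τ = (1 - θ) τ ^ (1 / (1 - θ))`.
A regular subgradient `s` of `h` at `w` is approximated by regular subgradients `s'` of `Φ_τ`,
for arbitrarily small `τ`, at points `u` near `w` where `Φ_τ u` is near `h w`: pick `w'` with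
`Φ_τ w'` close to `h w` and minimize `Φ_τ - ⟪s, ·⟫ + σ ‖· - w'‖²` over a small ball (local lower
semicontinuity of `f` gives a minimizer; the quadratic term keeps it interior).
Then `(K_τ / τ) • s'` is a regular subgradient of `f` at `x̄ + τ u`, where `f - f x̄ = K_τ Φ_τ u`,
and both sides of the KŁ inequality there scale by the same power `τ ^ (θ / (1 - θ))`.
So `s'`, hence `s`, satisfies the KŁ bound for `(1 - θ) h`; the bound passes to limiting
subgradients because it depends continuously on the value of `h`.
-/

open Metric Set

namespace EReal

lemma coe_mul_le_coe_mul_iff {r : ℝ} (hr : 0 < r) {a b : EReal} :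
    (r : EReal) * a ≤ r * b ↔ a ≤ b := by
  have hcancel : ∀ x : EReal, ((r⁻¹ : ℝ) : EReal) * (r * x) = x := fun x => by
    rw [← mul_assoc, ← EReal.coe_mul, inv_mul_cancel₀ hr.ne', EReal.coe_one, one_mul]
  refine ⟨fun h => ?_, fun h => mul_le_mul_of_nonneg_left h (by exact_mod_cast hr.le)⟩
  rw [← hcancel a, ← hcancel b]
  exact mul_le_mul_of_nonneg_left h (by exact_mod_cast (inv_pos.2 hr).le)

lemma coe_mul_lt_coe_mul_iff {r : ℝ} (hr : 0 < r) {a b : EReal} :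
    (r : EReal) * a < r * b ↔ a < b :=
  lt_iff_lt_of_le_iff_le (coe_mul_le_coe_mul_iff hr)

lemma coe_mul_mem_Ioo_zero_top_iff {r : ℝ} (hr : 0 < r) {a : EReal} :
    (r : EReal) * a ∈ Ioo 0 ⊤ ↔ a ∈ Ioo 0 ⊤ := by
  conv_lhs => rw [← mul_zero (r : EReal), ← EReal.coe_mul_top_of_pos hr]
  simp only [mem_Ioo, coe_mul_lt_coe_mul_iff hr]

lemma sub_coe_le_sub_coe_iff (c : ℝ) {a b : EReal} : a - c ≤ b - c ↔ a ≤ b := by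
  rw [sub_eq_add_neg, sub_eq_add_neg, ← EReal.coe_neg]
  exact (addLECancellable_coe (-c)).add_le_add_iff_right

lemma coe_mul_sub_coe_le_iff {r : ℝ} (hr : 0 < r) (c : ℝ) {a b : EReal} :
    (r : EReal) * (a - c) ≤ r * (b - c) ↔ a ≤ b := by
  rw [coe_mul_le_coe_mul_iff hr, sub_coe_le_sub_coe_iff]

lemma coe_inv_mul_sub_coe_eq {K : ℝ} (hK : 0 < K) (c t : ℝ) :
    ((K⁻¹ : ℝ) : EReal) * (((c + K * t : ℝ) : EReal) - c) = t := by
  rw [← EReal.coe_sub, ← EReal.coe_mul, _root_.add_sub_cancel_left, inv_mul_cancel_left₀ hK.ne']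

lemma coe_mul_add_coe_sub_coe {r : ℝ} (hr : 0 ≤ r) (a : EReal) (c t : ℝ) :
    (r : EReal) * (a + t - c) = r * (a - c) + ((r * t : ℝ) : EReal) := by
  rw [sub_eq_add_neg, sub_eq_add_neg, add_right_comm,
    EReal.left_distrib_of_nonneg_of_ne_top (by exact_mod_cast hr) (EReal.coe_ne_top r),
    EReal.coe_mul]

lemma add_coe_le_coe_iff (a : EReal) (p q : ℝ) : a + p ≤ q ↔ a ≤ ((q - p : ℝ) : EReal) := by
  rw [EReal.coe_sub, EReal.le_sub_iff_add_le (.inl (coe_ne_bot p)) (.inl (coe_ne_top p))]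

end EReal

section Topology

variable {α X Y : Type*} [TopologicalSpace X] [TopologicalSpace Y]

lemma frequently_exists_mem_of_frequently_prod {l : Filter α} {x : X} {U : Set X} (hU : U ∈ 𝓝 x)
    {P : α → X → Prop} (h : ∃ᶠ p in l ×ˢ 𝓝 x, P p.1 p.2) : ∃ᶠ a in l, ∃ y ∈ U, P a y :=
  fun hne => h ((hne.prod_mk hU).mono fun p hp hP => hp.1 ⟨p.2, hp.2, hP⟩)

lemma eventually_forall_lt_of_le_liminf {l : Filter α} {Φ : α → X → EReal} {R : X → ℝ}
    (hR : Continuous R) {K : Set X} (hK : IsCompact K)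
    (hle : ∀ u ∈ K, (R u : EReal) ≤ liminf (fun p : α × X => Φ p.1 p.2) (l ×ˢ 𝓝 u))
    {δ : ℝ} (hδ : 0 < δ) : ∀ᶠ a in l, ∀ u ∈ K, ((R u - δ : ℝ) : EReal) < Φ a u := by
  suffices key : ∀ᶠ p in l ×ˢ 𝓝ˢ K, ((R p.2 - δ : ℝ) : EReal) < Φ p.1 p.2 from
    key.curry.mono fun _ h => h.self_of_nhdsSet
  refine hK.mem_prod_nhdsSet_of_forall fun u hu => ?_
  have hΦ : ∀ᶠ p in l ×ˢ 𝓝 u, ((R u - δ / 2 : ℝ) : EReal) < Φ p.1 p.2 :=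
    eventually_lt_of_lt_liminf ((EReal.coe_lt_coe_iff.2 (by linarith)).trans_le (hle u hu))
  have hRu : ∀ᶠ p : α × X in l ×ˢ 𝓝 u, R p.2 < R u + δ / 2 :=
    tendsto_snd.eventually ((hR.tendsto u).eventually (eventually_lt_nhds (by linarith)))
  filter_upwards [hΦ, hRu] with p hp hRp
  exact (EReal.coe_lt_coe_iff.2 (by linarith)).trans hp

lemma IsCompact.exists_isMinOn_of_isClosed_sublevel {K : Set X} (hK : IsCompact K) {ψ : X → EReal}
    {x₀ : X} (hx₀ : x₀ ∈ K) {β : ℝ} (hβ : ψ x₀ ≤ β)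
    (hcl : ∀ q : ℝ, q ≤ β → IsClosed {x | x ∈ K ∧ ψ x ≤ q}) : ∃ x ∈ K, IsMinOn ψ K x := by
  let Q := {q : ℝ // q ≤ β ∧ ∃ x ∈ K, ψ x ≤ q}
  let S : Q → Set X := fun q => {x | x ∈ K ∧ ψ x ≤ q.1}
  let qβ : Q := ⟨β, le_rfl, x₀, hx₀, hβ⟩
  have hdir : Directed (· ⊇ ·) S := fun q q' => by
    rcases le_total q.1 q'.1 with h | h
    · exact ⟨q, subset_rfl, fun x hx => ⟨hx.1, hx.2.trans (EReal.coe_le_coe_iff.2 h)⟩⟩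
    · exact ⟨q', fun x hx => ⟨hx.1, hx.2.trans (EReal.coe_le_coe_iff.2 h)⟩, subset_rfl⟩
  have : Nonempty Q := ⟨qβ⟩
  obtain ⟨x, hx⟩ := IsCompact.nonempty_iInter_of_directed_nonempty_isCompact_isClosed S hdir
    (fun q => q.2.2) (fun q => hK.of_isClosed_subset (hcl _ q.2.1) fun _ h => h.1)
    (fun q => hcl _ q.2.1)
  have hxS : ∀ q, x ∈ S q := mem_iInter.1 hx
  refine ⟨x, (hxS qβ).1, isMinOn_iff.2 fun y hy => not_lt.1 fun hlt => ?_⟩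
  obtain ⟨q, hyq, hqx⟩ := EReal.exists_between_coe_real hlt
  have hqβ : q ≤ β := EReal.coe_le_coe_iff.1 (hqx.le.trans (hxS qβ).2)
  exact (hxS ⟨q, hqβ, y, hy, hyq.le⟩).2.not_gt hqx

lemma IsCompact.exists_isMinOn_add_of_isClosed_sublevel {K : Set X} (hK : IsCompact K)
    {F : X → EReal} {p : X → ℝ} (hp : Continuous p) {M : ℝ}
    (hcl : ∀ G : X → ℝ, Continuous G → (∀ u ∈ K, G u ≤ M) → IsClosed {u | u ∈ K ∧ F u ≤ G u})
    {x₀ : X} (hx₀ : x₀ ∈ K) {β : ℝ} (hβ : F x₀ + p x₀ ≤ β) (hpM : ∀ u ∈ K, β - p u ≤ M) :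
    ∃ x ∈ K, IsMinOn (fun u => F u + (p u : EReal)) K x := by
  refine hK.exists_isMinOn_of_isClosed_sublevel hx₀ hβ fun q hq => ?_
  have hset : {x | x ∈ K ∧ F x + (p x : EReal) ≤ q}
      = {x | x ∈ K ∧ F x ≤ ((q - p x : ℝ) : EReal)} := by
    ext x
    simp only [mem_ofPred_eq, EReal.add_coe_le_coe_iff]
  rw [hset]
  exact hcl _ (by fun_prop) fun x hx => by linarith [hpM x hx]

lemma isClosed_setOf_comp_le {f : Y → EReal} {B : Set Y} {L : EReal}
    (hf : ∀ α : ℝ, (α : EReal) ≤ L → IsClosed {y | y ∈ B ∧ f y ≤ α})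
    {K : Set X} (hK : IsClosed K) {A : X → Y} (hA : Continuous A) (hAK : MapsTo A K B)
    {G : X → ℝ} (hG : Continuous G) (hGL : ∀ u ∈ K, (G u : EReal) < L) :
    IsClosed {u | u ∈ K ∧ f (A u) ≤ G u} := by
  refine isClosed_iff_frequently.2 fun u hu => ?_
  have huK : u ∈ K := isClosed_iff_frequently.1 hK u (hu.mono fun _ h => h.1)
  refine ⟨huK, not_lt.1 fun hlt => ?_⟩
  obtain ⟨α, hGα, hαf⟩ := EReal.exists_between_coe_real (lt_min hlt (hGL u huK))
  have hC := (hf α (hαf.le.trans (min_le_right _ _))).preimage hA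
  have hGα' : ∀ᶠ u' in 𝓝 u, G u' < α :=
    (hG.tendsto u).eventually (eventually_lt_nhds (EReal.coe_lt_coe_iff.1 hGα))
  have hAu := isClosed_iff_frequently.1 hC u ((hu.and_eventually hGα').mono
    fun _ h => ⟨hAK h.1.1, h.1.2.trans (EReal.coe_le_coe_iff.2 h.2.le)⟩)
  exact hAu.2.not_gt (hαf.trans_le (min_le_left _ _))

end Topology

section Subgradients

variable {n : ℕ}

lemma le_norm_of_ofReal_le_distZero {S : Set (En n)} {r : ℝ}
    (h : ENNReal.ofReal r ≤ DistZero S) {v : En n} (hv : v ∈ S) : r ≤ ‖v‖ := by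
  have := h.trans (Metric.infEDist_le_edist_of_mem hv)
  rwa [edist_dist, dist_zero_left, ENNReal.ofReal_le_ofReal_iff (norm_nonneg v)] at this

lemma ofReal_le_distZero {S : Set (En n)} {r : ℝ} (h : ∀ v ∈ S, r ≤ ‖v‖) :
    ENNReal.ofReal r ≤ DistZero S :=
  Metric.le_infEDist.2 fun v hv => by
    rw [edist_dist, dist_zero_left]
    exact ENNReal.ofReal_le_ofReal (h v hv)

lemma regSubgrad_subset_limSubgrad (f : En n → EReal) (x : En n) :
    RegSubgrad f x ⊆ LimSubgrad f x := fun v hv =>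
  ⟨fun _ => x, fun _ => v, tendsto_const_nhds, tendsto_const_nhds, tendsto_const_nhds, fun _ => hv⟩

lemma le_norm_of_mem_limSubgrad {g : En n → EReal} {w v : En n} {φ : EReal → ℝ} {U : Set EReal}
    (hU : U ∈ 𝓝 (g w)) (hφ : ContinuousAt φ (g w))
    (hreg : ∀ x, g x ∈ U → ∀ v ∈ RegSubgrad g x, φ (g x) ≤ ‖v‖) (hv : v ∈ LimSubgrad g w) :
    φ (g w) ≤ ‖v‖ := by
  obtain ⟨xk, vk, -, hvk, hgk, hvk_reg⟩ := hv
  exact le_of_tendsto_of_tendsto (hφ.tendsto.comp hgk) hvk.norm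
    ((hgk.eventually hU).mono fun k hk => hreg _ hk _ (hvk_reg k))

lemma inv_smul_mem_regSubgrad_of_mul_sub {F : En n → EReal} {x v : En n} {r c : ℝ} (hr : 0 < r)
    (hv : v ∈ RegSubgrad (fun u => (r : EReal) * (F u - c)) x) : r⁻¹ • v ∈ RegSubgrad F x := by
  intro ε hε
  obtain ⟨δ, hδ, h⟩ := hv (r * ε) (by positivity)
  refine ⟨δ, hδ, fun u hu hne => ?_⟩
  have hscale : inner ℝ v (u - x) - r * ε * ‖u - x‖
      = r * (inner ℝ (r⁻¹ • v) (u - x) - ε * ‖u - x‖) := by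
    rw [real_inner_smul_left]; field_simp
  have := h u hu hne
  rwa [hscale, ← EReal.coe_mul_add_coe_sub_coe hr.le, EReal.coe_mul_sub_coe_le_iff hr] at this

lemma inv_smul_mem_regSubgrad_of_comp_homothety {f : En n → EReal} {x u s : En n} {τ : ℝ}
    (hτ : 0 < τ) (hs : s ∈ RegSubgrad (fun u => f (x + τ • u)) u) :
    τ⁻¹ • s ∈ RegSubgrad f (x + τ • u) := by
  intro ε hε
  obtain ⟨δ, hδ, h⟩ := hs (τ * ε) (by positivity)
  refine ⟨τ * δ, by positivity, fun z hzδ hne => ?_⟩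
  set d := τ⁻¹ • (z - (x + τ • u))
  have hz : x + τ • (u + d) = z := by
    simp only [d, smul_add, smul_inv_smul₀ hτ.ne']; abel
  have hd : ‖d‖ = τ⁻¹ * ‖z - (x + τ • u)‖ := by
    rw [norm_smul, Real.norm_of_nonneg (inv_nonneg.2 hτ.le)]
  have := h (u + d) (by rwa [add_sub_cancel_left, hd, inv_mul_lt_iff₀ hτ])
    (fun hud => hne (by rw [← hz, hud]))
  beta_reduce at this
  rw [add_sub_cancel_left, hz] at this
  convert this using 3
  rw [real_inner_smul_left, real_inner_smul_right, hd]
  field_simp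

lemma mem_regSubgrad_of_forall_add_sub_sq_le {F : En n → EReal} {x v : En n} {ρ σ : ℝ}
    (hρ : 0 < ρ)
    (h : ∀ u, ‖u - x‖ < ρ → F x + ((inner ℝ v (u - x) - σ * ‖u - x‖ ^ 2 : ℝ) : EReal) ≤ F u) :
    v ∈ RegSubgrad F x := by
  intro ε hε
  refine ⟨min ρ (ε / (|σ| + 1)), lt_min hρ (by positivity), fun u hu _ =>
    (h u (hu.trans_le (min_le_left _ _))).trans' (add_le_add le_rfl (EReal.coe_le_coe_iff.2 ?_))⟩
  have hσu : (|σ| + 1) * ‖u - x‖ ≤ ε :=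
    ((lt_div_iff₀' (by positivity)).1 (hu.trans_le (min_le_right _ _))).le
  have := norm_nonneg (u - x)
  nlinarith [le_abs_self σ]

lemma sub_smul_mem_regSubgrad_of_isMinOn {F : En n → EReal} {u w w' s : En n} {σ ρ : ℝ}
    (hρ : 0 < ρ)
    (hmin : IsMinOn (fun y => F y + ((σ * ‖y - w'‖ ^ 2 - inner ℝ s (y - w) : ℝ) : EReal))
      (ball u ρ) u) :
    s - (2 * σ) • (u - w') ∈ RegSubgrad F u := by
  set p : En n → ℝ := fun y => σ * ‖y - w'‖ ^ 2 - inner ℝ s (y - w)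
  refine mem_regSubgrad_of_forall_add_sub_sq_le (σ := σ) hρ fun y hy => ?_
  have hid : inner ℝ (s - (2 * σ) • (u - w')) (y - u) - σ * ‖y - u‖ ^ 2 = p u - p y := by
    have e1 : y - w' = (y - u) + (u - w') := by abel
    have e2 : inner ℝ s (y - w) = inner ℝ s (y - u) + inner ℝ s (u - w) := by
      rw [← inner_add_right]; congr 1; abel
    simp only [p, e1, e2, norm_add_sq_real, inner_sub_left, real_inner_smul_left,
      real_inner_comm (u - w') (y - u)]
    ring
  rw [hid, ← (EReal.addLECancellable_coe (p y)).add_le_add_iff_right, add_assoc,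
    ← EReal.coe_add, sub_add_cancel]
  exact isMinOn_iff.1 hmin y (mem_ball_iff_norm.2 hy)

lemma exists_forall_coe_le_of_mem_regSubgrad {g : En n → EReal} {w s : En n} {H : ℝ}
    (hH : g w = H) (hs : s ∈ RegSubgrad g w) {ε : ℝ} (hε : 0 < ε) :
    ∃ δ > 0, ∀ u, ‖u - w‖ < δ →
      ((H + inner ℝ s (u - w) - ε * ‖u - w‖ : ℝ) : EReal) ≤ g u := by
  obtain ⟨δ, hδ, h⟩ := hs ε hε
  refine ⟨δ, hδ, fun u hu => ?_⟩
  rcases eq_or_ne u w with rfl | hne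
  · simp [hH]
  · have := h u hu hne
    rwa [hH, ← EReal.coe_add, ← add_sub_assoc] at this

lemma exists_mem_regSubgrad_of_affine_approx {F : En n → EReal} {w w' s : En n} {H r κ : ℝ}
    (hr : 0 < r) (hκ : 0 < κ)
    (hlow : ∀ u ∈ closedBall w r, ((H + inner ℝ s (u - w) - κ : ℝ) : EReal) < F u)
    (hw' : w' ∈ closedBall w (r / 4))
    (hFw' : F w' < ((H + inner ℝ s (w' - w) + κ : ℝ) : EReal))
    (hcl : ∀ G : En n → ℝ, Continuous G → (∀ u ∈ closedBall w r, G u ≤ H + κ + ‖s‖ * r) →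
      IsClosed {u | u ∈ closedBall w r ∧ F u ≤ G u}) :
    ∃ u ∈ ball w (r / 2), ∃ a : ℝ, F u = a ∧ |a - (H + inner ℝ s (u - w))| < κ ∧
      ∃ s' ∈ RegSubgrad F u, ‖s' - s‖ < 16 * κ / r := by
  -- `σ (r / 4) ^ 2 = 2 κ`: a minimizer of `F + pen` ends up within `r / 4` of `w'`.
  set σ := 32 * κ / r ^ 2 with hσ_def
  have hσ : 0 < σ := by positivity
  set pen : En n → ℝ := fun u => σ * ‖u - w'‖ ^ 2 - inner ℝ s (u - w)
  have hpen_le : ∀ u ∈ closedBall w r, -pen u ≤ ‖s‖ * r := fun u hu => by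
    have h1 := real_inner_le_norm s (u - w)
    have h2 := mul_le_mul_of_nonneg_left (mem_closedBall_iff_norm.1 hu) (norm_nonneg s)
    have h3 : 0 ≤ σ * ‖u - w'‖ ^ 2 := by positivity
    simp only [pen]
    linarith
  have hpen_w' : F w' + (pen w' : EReal) < ((H + κ : ℝ) : EReal) := by
    have := EReal.add_lt_add_right_coe hFw' (pen w')
    rwa [← EReal.coe_add, show H + inner ℝ s (w' - w) + κ + pen w' = H + κ by
      simp only [pen, sub_self, norm_zero]; ring] at this
  have hw'r : w' ∈ closedBall w r := closedBall_subset_closedBall (by linarith) hw'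
  obtain ⟨u, hu, hmin⟩ := (isCompact_closedBall w r).exists_isMinOn_add_of_isClosed_sublevel
    (by fun_prop) hcl hw'r hpen_w'.le fun x hx => by linarith [hpen_le x hx]
  have hpen_u := (isMinOn_iff.1 hmin w' hw'r).trans_lt hpen_w'
  have hFu_top : F u ≠ ⊤ := fun h => by simp [h] at hpen_u
  set a := (F u).toReal
  have ha : F u = a := (EReal.coe_toReal hFu_top (ne_bot_of_gt (hlow u hu))).symm
  have h_lo : H + inner ℝ s (u - w) - κ < a := by exact_mod_cast ha ▸ hlow u hu
  have h_up : a + pen u < H + κ := by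
    rw [ha, ← EReal.coe_add] at hpen_u
    exact_mod_cast hpen_u
  simp only [pen] at h_up
  have hu_w' : ‖u - w'‖ < r / 4 := by
    refine lt_of_pow_lt_pow_left₀ 2 (by positivity) (lt_of_mul_lt_mul_left ?_ hσ.le)
    rw [show σ * (r / 4) ^ 2 = 2 * κ by rw [hσ_def]; field_simp; ring]
    linarith
  have hu_w : ‖u - w‖ < r / 2 := by
    have := norm_sub_le_norm_sub_add_norm_sub u w' w
    have := mem_closedBall_iff_norm.1 hw'
    linarith
  have hball : ball u (r / 2) ⊆ closedBall w r := ball_subset_closedBall.trans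
    (closedBall_subset_closedBall' (by rw [dist_eq_norm]; linarith))
  refine ⟨u, mem_ball_iff_norm.2 hu_w, a, ha, abs_lt.2 ⟨by linarith, ?_⟩, _,
    sub_smul_mem_regSubgrad_of_isMinOn (half_pos hr) (hmin.on_subset hball), ?_⟩
  · nlinarith [sq_nonneg ‖u - w'‖]
  · rw [sub_sub_cancel_left, norm_neg, norm_smul, Real.norm_of_nonneg (by positivity)]
    calc 2 * σ * ‖u - w'‖ < 2 * σ * (r / 4) := mul_lt_mul_of_pos_left hu_w' (by positivity)
      _ = 16 * κ / r := by rw [hσ_def]; field_simp; ring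

def epiLiminf (Φ : ℝ → En n → EReal) (u : En n) : EReal :=
  liminf (fun p : ℝ × En n => Φ p.1 p.2) (𝓝[>] 0 ×ˢ 𝓝 u)

lemma exists_frequently_affine_approx {Φ : ℝ → En n → EReal} {w s : En n} {H : ℝ}
    (hH : epiLiminf Φ w = H) (hs : s ∈ RegSubgrad (epiLiminf Φ) w) {ε : ℝ} (hε : 0 < ε) :
    ∃ r₀ > 0, ∀ r, 0 < r → r < r₀ → ∃ᶠ τ in 𝓝[>] 0,
      (∀ u ∈ closedBall w r, ((H + inner ℝ s (u - w) - 2 * ε * r : ℝ) : EReal) < Φ τ u) ∧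
      ∃ w' ∈ closedBall w (r / 4), Φ τ w' < ((H + inner ℝ s (w' - w) + 2 * ε * r : ℝ) : EReal) := by
  obtain ⟨δ, hδ, hlow⟩ := exists_forall_coe_le_of_mem_regSubgrad hH hs hε
  refine ⟨δ, hδ, fun r hr hrδ => ?_⟩
  have hunif := eventually_forall_lt_of_le_liminf (by fun_prop) (isCompact_closedBall w r)
    (fun u hu => hlow u ((mem_closedBall_iff_norm.1 hu).trans_lt hrδ)) (δ := ε * r)
    (by positivity)
  set ρ := min (r / 4) (ε * r / (‖s‖ + 1))
  have hρ : 0 < ρ := lt_min (by positivity) (by positivity)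
  have hsρ : ‖s‖ * ρ ≤ ε * r := by
    have := (le_div_iff₀ (by positivity : (0 : ℝ) < ‖s‖ + 1)).1 (min_le_right _ _ : ρ ≤ _)
    nlinarith
  have hliminf : epiLiminf Φ w < ((H + ε * r : ℝ) : EReal) :=
    hH ▸ EReal.coe_lt_coe_iff.2 (by linarith [show 0 < ε * r by positivity])
  have hfreq := frequently_exists_mem_of_frequently_prod (P := fun τ y => Φ τ y < _)
    (ball_mem_nhds w hρ) (frequently_lt_of_liminf_lt (by isBoundedDefault) hliminf)
  refine (hfreq.and_eventually hunif).mono ?_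
  rintro τ ⟨⟨w', hw', hΦw'⟩, hlowτ⟩
  have hw'w : ‖w' - w‖ < ρ := mem_ball_iff_norm.1 hw'
  refine ⟨fun u hu => (EReal.coe_le_coe_iff.2 ?_).trans_lt (hlowτ u hu), w',
    mem_closedBall_iff_norm.2 (hw'w.le.trans (min_le_left _ _)),
    hΦw'.trans_le (EReal.coe_le_coe_iff.2 ?_)⟩
  · nlinarith [mul_le_mul_of_nonneg_left (mem_closedBall_iff_norm.1 hu) hε.le]
  · nlinarith [(abs_le.1 ((abs_real_inner_le_norm s (w' - w)).trans
      (mul_le_mul_of_nonneg_left hw'w.le (norm_nonneg s)))).1]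

lemma frequently_exists_approx_regSubgrad {Φ : ℝ → En n → EReal} {w s : En n} {H : ℝ}
    (hH : epiLiminf Φ w = H) (hs : s ∈ RegSubgrad (epiLiminf Φ) w)
    (hcl : ∀ r M : ℝ, ∀ᶠ τ in 𝓝[>] 0, ∀ G : En n → ℝ, Continuous G →
      (∀ u ∈ closedBall w r, G u ≤ M) → IsClosed {u | u ∈ closedBall w r ∧ Φ τ u ≤ G u})
    {η : ℝ} (hη : 0 < η) :
    ∃ᶠ τ in 𝓝[>] 0, ∃ u ∈ ball w η, ∃ a : ℝ, Φ τ u = a ∧ |a - H| < η ∧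
      ∃ s' ∈ RegSubgrad (Φ τ) u, ‖s' - s‖ < η := by
  obtain ⟨r₀, hr₀, happrox⟩ := exists_frequently_affine_approx hH hs (ε := η / 64)
    (by positivity)
  set r := min (r₀ / 2) (η / (‖s‖ + η + 1))
  have hr : 0 < r := lt_min (by positivity) (by positivity)
  have hrr₀ : r < r₀ := (min_le_left _ _).trans_lt (by linarith)
  have hrη : r * (‖s‖ + η + 1) ≤ η := (le_div_iff₀ (by positivity)).1 (min_le_right _ _)
  refine ((happrox r hr hrr₀).and_eventually
    (hcl r (H + 2 * (η / 64) * r + ‖s‖ * r))).mono ?_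
  rintro τ ⟨⟨hlowτ, w', hw', hΦw'⟩, hclτ⟩
  obtain ⟨u, hu, a, ha, haH, s', hs', hs's⟩ :=
    exists_mem_regSubgrad_of_affine_approx hr (by positivity) hlowτ hw' hΦw' hclτ
  have hinner := abs_le.1 ((abs_real_inner_le_norm s (u - w)).trans
    (mul_le_mul_of_nonneg_left (mem_ball_iff_norm.1 hu).le (norm_nonneg s)))
  have hκ : 2 * (η / 64) * r + ‖s‖ * (r / 2) < η := by nlinarith [norm_nonneg s]
  refine ⟨u, ball_subset_ball (by nlinarith [norm_nonneg s]) hu, a, ha,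
    abs_lt.2 ⟨by linarith [(abs_lt.1 haH).1], by linarith [(abs_lt.1 haH).2]⟩, s', hs', ?_⟩
  rw [show 16 * (2 * (η / 64) * r) / r = η / 2 by field_simp; ring] at hs's
  linarith

end Subgradients

section ThetaSubderivative

variable {n : ℕ} {f : En n → EReal} {x : En n} {c θ μ εK ν τ : ℝ}

def thetaScale (θ τ : ℝ) : ℝ := (1 - θ) * τ ^ (1 / (1 - θ))

def thetaQuotient (f : En n → EReal) (x : En n) (θ τ : ℝ) (u : En n) : EReal :=
  (((thetaScale θ τ)⁻¹ : ℝ) : EReal) * (f (x + τ • u) - f x)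

lemma thetaSubderiv_eq_epiLiminf (f : En n → EReal) (x : En n) (θ : ℝ) :
    ThetaSubderiv f x θ = epiLiminf (thetaQuotient f x θ) := rfl

lemma thetaScale_pos (hθ : θ < 1) (hτ : 0 < τ) : 0 < thetaScale θ τ :=
  mul_pos (sub_pos.2 hθ) (Real.rpow_pos_of_pos hτ _)

lemma thetaScale_eq_mul (hθ : θ < 1) (hτ : 0 < τ) :
    thetaScale θ τ = τ * ((1 - θ) * τ ^ (θ / (1 - θ))) := by
  have h1θ : 1 - θ ≠ 0 := (sub_pos.2 hθ).ne'
  rw [thetaScale, show 1 / (1 - θ) = 1 + θ / (1 - θ) by field_simp; ring,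
    Real.rpow_add hτ, Real.rpow_one]
  ring

lemma thetaScale_mul_rpow (hθ : θ < 1) (hτ : 0 < τ) {a : ℝ} (ha : 0 ≤ a) :
    (thetaScale θ τ * a) ^ θ = τ ^ (θ / (1 - θ)) * ((1 - θ) * a) ^ θ := by
  have h1θ : 0 < 1 - θ := sub_pos.2 hθ
  rw [thetaScale, show (1 - θ) * τ ^ (1 / (1 - θ)) * a = τ ^ (1 / (1 - θ)) * ((1 - θ) * a) by ring,
    Real.mul_rpow (Real.rpow_nonneg hτ.le _) (by positivity), ← Real.rpow_mul hτ.le]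
  congr 2
  field_simp

lemma tendsto_thetaScale (hθ : θ < 1) : Tendsto (thetaScale θ) (𝓝 0) (𝓝 0) := by
  have hp : 0 < 1 / (1 - θ) := by have := sub_pos.2 hθ; positivity
  have : ContinuousAt (fun τ : ℝ => (1 - θ) * τ ^ (1 / (1 - θ))) 0 :=
    continuousAt_const.mul (Real.continuousAt_rpow_const 0 _ (Or.inr hp.le))
  have h := this.tendsto
  simp only [Real.zero_rpow hp.ne', mul_zero] at h
  exact h

lemma eventually_mul_lt_and_thetaScale_mul_lt (hθ : θ < 1) (C M : ℝ) {ε ε' : ℝ} (hε : 0 < ε)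
    (hε' : 0 < ε') : ∀ᶠ τ in 𝓝[>] 0, τ * C < ε ∧ thetaScale θ τ * M < ε' := by
  have h1 : Tendsto (fun τ : ℝ => τ * C) (𝓝 0) (𝓝 0) := by
    simpa using (continuous_mul_const C).tendsto 0
  have h2 : Tendsto (fun τ => thetaScale θ τ * M) (𝓝 0) (𝓝 0) := by
    simpa using (tendsto_thetaScale hθ).mul_const M
  exact ((h1.eventually (eventually_lt_nhds hε)).and
    (h2.eventually (eventually_lt_nhds hε'))).filter_mono nhdsWithin_le_nhds

lemma thetaQuotient_le_coe_iff {u : En n} (hfc : f x = c) (hK : 0 < thetaScale θ τ) (t : ℝ) :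
    thetaQuotient f x θ τ u ≤ t ↔ f (x + τ • u) ≤ ((c + thetaScale θ τ * t : ℝ) : EReal) := by
  rw [thetaQuotient, hfc, ← EReal.coe_inv_mul_sub_coe_eq hK c t,
    EReal.coe_mul_sub_coe_le_iff (inv_pos.2 hK)]

lemma thetaQuotient_eq_coe_iff {u : En n} (hfc : f x = c) (hK : 0 < thetaScale θ τ) (t : ℝ) :
    thetaQuotient f x θ τ u = t ↔ f (x + τ • u) = ((c + thetaScale θ τ * t : ℝ) : EReal) := by
  rw [thetaQuotient, hfc, ← EReal.coe_inv_mul_sub_coe_eq hK c t]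
  exact ⟨fun h => le_antisymm ((EReal.coe_mul_sub_coe_le_iff (inv_pos.2 hK) c).1 h.le)
    ((EReal.coe_mul_sub_coe_le_iff (inv_pos.2 hK) c).1 h.ge), fun h => by rw [h]⟩

lemma div_smul_mem_regSubgrad_of_mem_regSubgrad_thetaQuotient {u s : En n} (hfc : f x = c)
    (hθ : θ < 1) (hτ : 0 < τ) (hs : s ∈ RegSubgrad (thetaQuotient f x θ τ) u) :
    (thetaScale θ τ / τ) • s ∈ RegSubgrad f (x + τ • u) := by
  have hK := thetaScale_pos hθ hτ
  have h1 := inv_smul_mem_regSubgrad_of_mul_sub (F := fun u => f (x + τ • u)) (c := c)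
    (inv_pos.2 hK) (by rw [← hfc]; exact hs)
  rw [inv_inv] at h1
  have h2 := inv_smul_mem_regSubgrad_of_comp_homothety hτ h1
  rwa [smul_smul, inv_mul_eq_div] at h2

lemma eventually_isClosed_thetaQuotient_sublevel (hloc : LocallyLsc f x) (hfc : f x = c)
    (hθ : θ < 1) (w : En n) (r M : ℝ) :
    ∀ᶠ τ in 𝓝[>] 0, ∀ G : En n → ℝ, Continuous G → (∀ u ∈ closedBall w r, G u ≤ M) →
      IsClosed {u | u ∈ closedBall w r ∧ thetaQuotient f x θ τ u ≤ G u} := by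
  obtain ⟨ε, hε, hcl⟩ := hloc
  filter_upwards [self_mem_nhdsWithin, eventually_mul_lt_and_thetaScale_mul_lt hθ (‖w‖ + r) M hε hε]
    with τ (hτ : 0 < τ) ⟨hτw, hτM⟩ G hG hGM
  have hK := thetaScale_pos hθ hτ
  simp only [thetaQuotient_le_coe_iff hfc hK]
  refine isClosed_setOf_comp_le (B := {y | ‖y - x‖ ≤ ε}) hcl isClosed_closedBall (by fun_prop)
    (fun u hu => ?_) (by fun_prop) fun u hu => ?_
  · show ‖x + τ • u - x‖ ≤ ε
    rw [add_sub_cancel_left, norm_smul, Real.norm_of_nonneg hτ.le]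
    have := norm_sub_norm_le u w
    have := mem_closedBall_iff_norm.1 hu
    nlinarith
  · rw [hfc, ← EReal.coe_add]
    exact EReal.coe_lt_coe_iff.2 (by nlinarith [hGM u hu])

lemma rpow_le_norm_of_mem_regSubgrad_thetaQuotient {u s : En n} {a : ℝ} (hfc : f x = c)
    (hθ : θ < 1)
    (hKL : ∀ y : En n, ‖y - x‖ ≤ εK → f y < (c : ℝ) + (ν : ℝ) →
      ENNReal.ofReal ((μ / (1 - θ)) * (max (f y - (c : ℝ)).toReal 0) ^ θ) ≤
        DistZero (LimSubgrad f y))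
    (hτ : 0 < τ) (hτu : τ * ‖u‖ ≤ εK) (ha0 : 0 ≤ a) (haν : thetaScale θ τ * a < ν)
    (ha : thetaQuotient f x θ τ u = a) (hs : s ∈ RegSubgrad (thetaQuotient f x θ τ) u) :
    μ / (1 - θ) * ((1 - θ) * a) ^ θ ≤ (1 - θ) * ‖s‖ := by
  have hK := thetaScale_pos hθ hτ
  have hfy := (thetaQuotient_eq_coe_iff hfc hK a).1 ha
  have hv := regSubgrad_subset_limSubgrad _ _
    (div_smul_mem_regSubgrad_of_mem_regSubgrad_thetaQuotient hfc hθ hτ hs)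
  have hKLy := hKL (x + τ • u)
    (by rwa [add_sub_cancel_left, norm_smul, Real.norm_of_nonneg hτ.le])
    (by rw [hfy, ← EReal.coe_add]; exact EReal.coe_lt_coe_iff.2 (by linarith))
  rw [hfy, ← EReal.coe_sub, EReal.toReal_coe, add_sub_cancel_left,
    max_eq_left (by positivity)] at hKLy
  have h := le_norm_of_ofReal_le_distZero hKLy hv
  rw [norm_smul, Real.norm_of_nonneg (by positivity), thetaScale_mul_rpow hθ hτ ha0,
    thetaScale_eq_mul hθ hτ, mul_div_cancel_left₀ _ hτ.ne'] at h
  have hT : 0 < τ ^ (θ / (1 - θ)) := Real.rpow_pos_of_pos hτ _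
  refine le_of_mul_le_mul_left ?_ hT
  calc τ ^ (θ / (1 - θ)) * (μ / (1 - θ) * ((1 - θ) * a) ^ θ)
      = μ / (1 - θ) * (τ ^ (θ / (1 - θ)) * ((1 - θ) * a) ^ θ) := by ring
    _ ≤ (1 - θ) * τ ^ (θ / (1 - θ)) * ‖s‖ := h
    _ = τ ^ (θ / (1 - θ)) * ((1 - θ) * ‖s‖) := by ring

lemma rpow_le_norm_of_mem_regSubgrad_thetaSubderiv {w s : En n} (hloc : LocallyLsc f x)
    (hfc : f x = c) (hθ : θ < 1) (hεK : 0 < εK) (hν : 0 < ν)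
    (hKL : ∀ y : En n, ‖y - x‖ ≤ εK → f y < (c : ℝ) + (ν : ℝ) →
      ENNReal.ofReal ((μ / (1 - θ)) * (max (f y - (c : ℝ)).toReal 0) ^ θ) ≤
        DistZero (LimSubgrad f y))
    (hw0 : 0 < ThetaSubderiv f x θ w) (hwt : ThetaSubderiv f x θ w < ⊤)
    (hs : s ∈ RegSubgrad (ThetaSubderiv f x θ) w) :
    μ / (1 - θ) * ((1 - θ) * (ThetaSubderiv f x θ w).toReal) ^ θ ≤ (1 - θ) * ‖s‖ := by
  set H := (ThetaSubderiv f x θ w).toReal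
  have hH : ThetaSubderiv f x θ w = H := (EReal.coe_toReal hwt.ne (ne_bot_of_gt hw0)).symm
  have hH0 : 0 < H := by exact_mod_cast hH ▸ hw0
  have h1θ : 0 < 1 - θ := sub_pos.2 hθ
  rw [thetaSubderiv_eq_epiLiminf] at hH hs
  suffices hfreq : ∃ᶠ p : ℝ × En n in 𝓝 (H, s),
      μ / (1 - θ) * ((1 - θ) * p.1) ^ θ ≤ (1 - θ) * ‖p.2‖ by
    have hlhs : ContinuousAt (fun p : ℝ × En n => μ / (1 - θ) * ((1 - θ) * p.1) ^ θ) (H, s) :=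
      continuousAt_const.mul ((by fun_prop : ContinuousAt (fun p : ℝ × En n => (1 - θ) * p.1)
        (H, s)).rpow_const (Or.inl (by positivity)))
    have hrhs : ContinuousAt (fun p : ℝ × En n => (1 - θ) * ‖p.2‖) (H, s) := by fun_prop
    by_contra! hlt
    exact hfreq ((hrhs.eventually_lt hlhs hlt).mono fun _ h => h.not_ge)
  refine Metric.nhds_basis_ball.frequently_iff.2 fun η hη => ?_
  have hη' : 0 < min η (min 1 (H / 2)) := lt_min hη (lt_min one_pos (half_pos hH0))
  obtain ⟨τ, ⟨u, hu, a, ha, haH, s', hs', hs's⟩, hτ, hτw, hτH⟩ :=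
    ((frequently_exists_approx_regSubgrad hH hs
      (eventually_isClosed_thetaQuotient_sublevel hloc hfc hθ w) hη').and_eventually
      (eventually_mem_nhdsWithin.and
        (eventually_mul_lt_and_thetaScale_mul_lt hθ (‖w‖ + 1) (H + 1) hεK hν))).exists
  have huw : ‖u - w‖ < min η (min 1 (H / 2)) := mem_ball_iff_norm.1 hu
  have haH' := abs_lt.1 haH
  have h1 := min_le_left η (min 1 (H / 2))
  have h2 := (min_le_right η (min 1 (H / 2))).trans (min_le_left 1 (H / 2))
  have h3 := (min_le_right η (min 1 (H / 2))).trans (min_le_right 1 (H / 2))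
  have hK := thetaScale_pos hθ hτ
  refine ⟨(a, s'), ?_, rpow_le_norm_of_mem_regSubgrad_thetaQuotient hfc hθ hKL hτ ?_ ?_ ?_ ha hs'⟩
  · rw [mem_ball, Prod.dist_eq, max_lt_iff, Real.dist_eq, dist_eq_norm]
    exact ⟨haH.trans_le h1, hs's.trans_le h1⟩
  · have := norm_le_norm_add_norm_sub' u w
    exact (mul_le_mul_of_nonneg_left (by linarith) (le_of_lt hτ)).trans hτw.le
  · linarith
  · exact (mul_le_mul_of_nonneg_left (by linarith) hK.le).trans_lt hτH

end ThetaSubderivative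

theorem statement_9_general {n : ℕ} (f : En n → EReal)
    (xb : En n) (c : ℝ) (hfc : f xb = (c : ℝ)) (hloc : LocallyLsc f xb)
    (θ : ℝ) (hθ1 : θ < 1)
    (h : En n → EReal) (hh : h = fun w => ThetaSubderiv f xb θ w)
    (μ : ℝ)
    (hKL : ∃ ε : ℝ, 0 < ε ∧ ∃ ν : ℝ, 0 < ν ∧
      ∀ x : En n, ‖x - xb‖ ≤ ε → f x < (c : ℝ) + (ν : ℝ) →
        ENNReal.ofReal ((μ / (1 - θ)) * (max (f x - (c : ℝ)).toReal 0) ^ θ) ≤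
          DistZero (LimSubgrad f x)) :
    ∀ w : En n, (0 : EReal) < h w → h w < ⊤ →
      ENNReal.ofReal ((μ / (1 - θ)) * ((1 - θ) * (h w).toReal) ^ θ) ≤
        DistZero (LimSubgrad (fun u => (((1 - θ : ℝ)) : EReal) * h u) w) := by
  obtain ⟨εK, hεK, ν, hν, hKL⟩ := hKL
  subst hh
  intro w hw0 hwt
  beta_reduce at hw0 hwt ⊢
  have h1θ : 0 < 1 - θ := sub_pos.2 hθ1
  set g : En n → EReal := fun u => ((1 - θ : ℝ) : EReal) * ThetaSubderiv f xb θ u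
  have hreg : ∀ y, g y ∈ Ioo 0 ⊤ → ∀ v ∈ RegSubgrad g y, μ / (1 - θ) * (g y).toReal ^ θ ≤ ‖v‖ := by
    intro y hy v hv
    obtain ⟨hy0, hyt⟩ := (EReal.coe_mul_mem_Ioo_zero_top_iff h1θ).1 hy
    have hs := inv_smul_mem_regSubgrad_of_mul_sub (c := 0) h1θ
      (by simpa only [EReal.coe_zero, sub_zero] using hv)
    have := rpow_le_norm_of_mem_regSubgrad_thetaSubderiv hloc hfc hθ1 hεK hν hKL hy0 hyt hs
    rwa [norm_smul, Real.norm_of_nonneg (inv_nonneg.2 h1θ.le), mul_inv_cancel_left₀ h1θ.ne',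
      ← EReal.toReal_coe (1 - θ), ← EReal.toReal_mul] at this
  have hgw := (EReal.coe_mul_mem_Ioo_zero_top_iff h1θ).2 ⟨hw0, hwt⟩
  have hφ : ContinuousAt (fun y : EReal => μ / (1 - θ) * y.toReal ^ θ) (g w) :=
    continuousAt_const.mul ((EReal.tendsto_toReal hgw.2.ne (ne_bot_of_gt hgw.1)).rpow_const
      (Or.inl (EReal.toReal_pos hgw.1 hgw.2.ne).ne'))
  refine ofReal_le_distZero fun v hv => ?_
  have := le_norm_of_mem_limSubgrad (Ioo_mem_nhds hgw.1 hgw.2) hφ hreg hv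
  rwa [EReal.toReal_mul, EReal.toReal_coe] at this

/-- if `f` has the KŁ property at `xb` with exponent `θ` and
modulus `μ`, then the scaled subderivative `(1-θ)h` satisfies the corresponding
KŁ inequality at every `w ∈ W`. -/
theorem statement_9 {n : ℕ} (f : En n → EReal) (hbot : ∀ x, f x ≠ ⊥)
    (xb : En n) (c : ℝ) (hfc : f xb = (c : ℝ)) (hloc : LocallyLsc f xb)
    (θ : ℝ) (hθ0 : 0 ≤ θ) (hθ1 : θ < 1)
    (h : En n → EReal) (hh : h = fun w => ThetaSubderiv f xb θ w)
    (μ : ℝ) (hμ : 0 < μ)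
    (hKL : ∃ ε : ℝ, 0 < ε ∧ ∃ ν : ℝ, 0 < ν ∧
      ∀ x : En n, ‖x - xb‖ ≤ ε → f x < (c : ℝ) + (ν : ℝ) →
        ENNReal.ofReal ((μ / (1 - θ)) * (max (f x - (c : ℝ)).toReal 0) ^ θ) ≤
          DistZero (LimSubgrad f x)) :
    ∀ w : En n, (0 : EReal) < h w → h w < ⊤ →
      ENNReal.ofReal ((μ / (1 - θ)) * ((1 - θ) * (h w).toReal) ^ θ) ≤
        DistZero (LimSubgrad (fun u => (((1 - θ : ℝ)) : EReal) * h u) w) :=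
  statement_9_general f xb c hfc hloc θ hθ1 h hh μ hKL
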